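/- arXiv:0905.2585 — 4 statements merged into one kernel-verified Lean document; each statement's English description precedes it below -/
import Mathlib

section
/- Consider the system y₁ = x(1 + y₂ + 2y₁²), y₂ = x(1 + y₁ + 2y₂²), together with the characteristic condition (1 - 4x·y₁)(1 - 4x·y₂) - x² = 0. If (a, b, c) is a solution with a, b, c > 0, then b = c. -/
theorem stmt6_general (a b c : ℝ) (ha : 0 < a)
    (h1 : b = a * (1 + c + 2 * b^2))
    (h2 : c = a * (1 + b + 2 * c^2))
    (h3 : (1 - 4 * a * b) * (1 - 4 * a * c) - a^2 = 0) :
    b = c := by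
  have hfactor : (b - c) * (1 + a - 2 * a * (b + c)) = 0 := by
    linear_combination h1 - h2
  -- Where `1 + a = 2a(b + c)`, the characteristic condition reads `-4a²(b - c)² = 0`.
  have hcube : a ^ 2 * (b - c) ^ 3 = 0 := by
    linear_combination ((1 - a - 2 * a * (b + c)) * hfactor - (b - c) * h3) / 4
  have hbc : (b - c) ^ 3 = 0 := (mul_eq_zero.mp hcube).resolve_left (pow_ne_zero 2 ha.ne')
  exact sub_eq_zero.mp (pow_eq_zero_iff three_ne_zero |>.mp hbc)

theorem stmt6 (a b c : ℝ) (ha : 0 < a) (hb : 0 < b) (hc : 0 < c)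
    (h1 : b = a * (1 + c + 2 * b^2))
    (h2 : c = a * (1 + b + 2 * c^2))
    (h3 : (1 - 4 * a * b) * (1 - 4 * a * c) - a^2 = 0) :
    b = c :=
  stmt6_general a b c ha h1 h2 h3
end

section
/- The positive real solutions (a, b) of the system b = a(1 + b + 2b²) and a² = (1 - 4ab)² are exactly the two points ((2√2 - 1)/7, 1/√2) and ((2√3 - 1)/11, (1 + √3)/2). -/
/-!
Since `a² = (1 - 4ab)²` means `a = ±(1 - 4ab)`, the system splits into two branches in which
`a` is the reciprocal of `1 + 4b` or of `4b - 1`. Multiplying the first equation by that factor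
eliminates `a` and leaves a quadratic in `b`, namely `2b² = 1` or `2b² - 2b - 1 = 0`; each has
exactly one positive root, and `a` is then read off by rationalizing the denominator.
-/

open Real

theorem eq_mul_and_sq_eq_sq_iff_or {R : Type*} [CommRing R] [NoZeroDivisors R] (a b : R) :
    (b = a * (1 + b + 2 * b ^ 2) ∧ a ^ 2 = (1 - 4 * a * b) ^ 2) ↔
      (a * (1 + 4 * b) = 1 ∧ 2 * b ^ 2 = 1) ∨
        (a * (4 * b - 1) = 1 ∧ 2 * b ^ 2 - 2 * b - 1 = 0) := by
  rw [sq_eq_sq_iff_eq_or_eq_neg]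
  constructor
  · rintro ⟨hb, ha | ha⟩
    · have hinv : a * (1 + 4 * b) = 1 := by linear_combination ha
      exact .inl ⟨hinv, by linear_combination (1 + 4 * b) * hb + (1 + b + 2 * b ^ 2) * hinv⟩
    · have hinv : a * (4 * b - 1) = 1 := by linear_combination -ha
      exact .inr ⟨hinv, by linear_combination (4 * b - 1) * hb + (1 + b + 2 * b ^ 2) * hinv⟩
  · rintro (⟨hinv, hquad⟩ | ⟨hinv, hquad⟩)
    · exact ⟨by linear_combination (-b) * hinv + a * hquad, .inl (by linear_combination hinv)⟩
    · exact ⟨by linear_combination (-b) * hinv + a * hquad, .inr (by linear_combination -hinv)⟩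

theorem two_mul_sq_eq_one_iff {b : ℝ} (hb : 0 < b) : 2 * b ^ 2 = 1 ↔ b = 1 / √2 := by
  have hsqrt : √2 ^ 2 = 2 := sq_sqrt zero_le_two
  have hpos : 0 < √2 := by positivity
  constructor
  · intro h
    rw [eq_div_iff hpos.ne']
    nlinarith [sq_nonneg (b * √2 - 1), mul_pos hb hpos]
  · rintro rfl
    rw [div_pow, hsqrt]
    norm_num

theorem two_mul_sq_sub_two_mul_sub_one_eq_zero_iff {b : ℝ} (hb : 0 < b) :
    2 * b ^ 2 - 2 * b - 1 = 0 ↔ b = (1 + √3) / 2 := by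
  have hsqrt : √3 ^ 2 = 3 := sq_sqrt (by norm_num)
  have hroots : 2 * b ^ 2 - 2 * b - 1 = 2 * (b - (1 + √3) / 2) * (b - (1 - √3) / 2) := by
    linear_combination (1 / 2 : ℝ) * hsqrt
  have hneg : (1 - √3) / 2 < 0 := by nlinarith [sqrt_nonneg 3]
  rw [hroots, mul_eq_zero, mul_eq_zero, sub_eq_zero, sub_eq_zero]
  constructor
  · rintro ((h | h) | h)
    · norm_num at h
    · exact h
    · linarith
  · exact fun h => .inl (.inr h)

theorem mul_one_add_four_mul_one_div_sqrt_two_eq_one_iff (a : ℝ) :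
    a * (1 + 4 * (1 / √2)) = 1 ↔ a = (2 * √2 - 1) / 7 := by
  have hsqrt : √2 ^ 2 = 2 := sq_sqrt zero_le_two
  rw [← eq_div_iff (by positivity)]
  constructor <;> rintro rfl <;> field_simp
  · linear_combination (-2 : ℝ) * hsqrt
  · linear_combination (2 : ℝ) * hsqrt

theorem mul_four_mul_one_add_sqrt_three_div_two_sub_one_eq_one_iff (a : ℝ) :
    a * (4 * ((1 + √3) / 2) - 1) = 1 ↔ a = (2 * √3 - 1) / 11 := by
  have hsqrt : √3 ^ 2 = 3 := sq_sqrt (by norm_num)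
  constructor
  · intro h
    linear_combination ((2 * √3 - 1) / 11) * h + (-4 * a / 11) * hsqrt
  · rintro rfl
    linear_combination (4 / 11 : ℝ) * hsqrt

theorem stmt7_general (a b : ℝ) (hb : 0 < b) :
    (b = a * (1 + b + 2 * b^2) ∧ a^2 = (1 - 4 * a * b)^2) ↔
      ((a = (2 * Real.sqrt 2 - 1) / 7 ∧ b = 1 / Real.sqrt 2) ∨
       (a = (2 * Real.sqrt 3 - 1) / 11 ∧ b = (1 + Real.sqrt 3) / 2)) := by
  rw [eq_mul_and_sq_eq_sq_iff_or, two_mul_sq_eq_one_iff hb,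
    two_mul_sq_sub_two_mul_sub_one_eq_zero_iff hb]
  refine or_congr (and_congr_left fun hb' => ?_) (and_congr_left fun hb' => ?_)
  · rw [hb', mul_one_add_four_mul_one_div_sqrt_two_eq_one_iff]
  · rw [hb', mul_four_mul_one_add_sqrt_three_div_two_sub_one_eq_one_iff]

theorem stmt7 (a b : ℝ) (ha : 0 < a) (hb : 0 < b) :
    (b = a * (1 + b + 2 * b^2) ∧ a^2 = (1 - 4 * a * b)^2) ↔
      ((a = (2 * Real.sqrt 2 - 1) / 7 ∧ b = 1 / Real.sqrt 2) ∨
       (a = (2 * Real.sqrt 3 - 1) / 11 ∧ b = (1 + Real.sqrt 3) / 2)) :=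
  stmt7_general a b hb
end

section
/- With A(x) = (1 - √(1 - 36x²))/(18x), the point (a, b) with a = (1 + 16√2)/146 and b = 1 + √2 satisfies b = A(a)(1 + b + b²) and (1 - 2A(a)b)² = A(a)². -/
/-!
`A(x)` is the smaller root `t` of `t = x (1 + 9 t²)`. At `x = a` this root is `t = (2√2 - 1)/7`,
and with `b = 1 + √2` both equations become identities in `√2` modulo `√2 ^ 2 = 2`;
in particular `1 - 2 t b = -t`.
-/

open Real

/-- `18 x t ≤ 1` singles out the smaller root: it makes `1 - 18 x t` the nonnegative square root
of `1 - 36 x²`. -/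
lemma one_sub_sqrt_div_eq_of_eq_mul_one_add_sq {x t : ℝ} (hx : x ≠ 0) (ht : 18 * x * t ≤ 1)
    (hroot : t = x * (1 + 9 * t ^ 2)) :
    (1 - √(1 - 36 * x ^ 2)) / (18 * x) = t := by
  have hsq : 1 - 36 * x ^ 2 = (1 - 18 * x * t) ^ 2 := by linear_combination 36 * x * hroot
  rw [hsq, sqrt_sq (by linarith), sub_sub_cancel]
  field_simp

lemma one_sub_sqrt_div_at_special_point :
    (1 - √(1 - 36 * ((1 + 16 * √2) / 146) ^ 2)) / (18 * ((1 + 16 * √2) / 146))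
      = (2 * √2 - 1) / 7 := by
  have hs : √2 ^ 2 = 2 := sq_sqrt zero_le_two
  apply one_sub_sqrt_div_eq_of_eq_mul_one_add_sq
  · positivity
  · nlinarith [one_lt_sqrt_two]
  · linear_combination (18 * (15 - 16 * √2) / 3577) * hs

theorem stmt9 :
    let A : ℝ → ℝ := fun x => (1 - Real.sqrt (1 - 36 * x^2)) / (18 * x)
    let a : ℝ := (1 + 16 * Real.sqrt 2) / 146
    let b : ℝ := 1 + Real.sqrt 2
    b = A a * (1 + b + b^2) ∧ (1 - 2 * A a * b)^2 = (A a)^2 := by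
  intro A a b
  have hA : A a = (2 * √2 - 1) / 7 := one_sub_sqrt_div_at_special_point
  have hs : √2 ^ 2 = 2 := sq_sqrt zero_le_two
  have hlin : 1 - 2 * A a * b = -A a := by
    rw [hA]
    linear_combination (-4 / 7) * hs
  refine ⟨?_, by rw [hlin, neg_sq]⟩
  rw [hA]
  linear_combination (-(2 * √2 + 5) / 7) * hs
end

section
/- Let A : [0,1] → M be a continuous map into k×k nonnegative real matrices such that 1 is an eigenvalue of A(α) for every α ∈ [0,1], and suppose the largest real eigenvalue Λ(α) of A(α) depends continuously on α, Λ(α) ≥ 1 for all α, Λ(0) = 1, and whenever Λ(γ) = 1 it is a simple root of the characteristic polynomial of A(γ). Then Λ(α) = 1 for all α ∈ [0,1]. -/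
/-!
Write `χ_α` for the characteristic polynomial of `A α` and `q_α = χ_α /ₘ (X - 1)`, which is an
exact quotient because `1` is always an eigenvalue. If `Λ α ≠ 1`, the root `Λ α` of `χ_α` is a
root of `q_α`; if `Λ α = 1`, simplicity of that root means exactly `q_α 1 ≠ 0`. Hence
`{Λ = 1} = {α | q_α (Λ α) ≠ 0}` is closed and open in `[0, 1]`, because the coefficients of `χ_α`
are polynomials in the entries of `A α`. It contains `0`, so it is all of `[0, 1]`.
-/

open Polynomial

theorem Matrix.continuous_charpoly_coeff {n R : Type*} [Fintype n] [DecidableEq n] [CommRing R]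
    [TopologicalSpace R] [IsTopologicalRing R] (i : ℕ) :
    Continuous fun M : Matrix n n R => M.charpoly.coeff i := by
  have h (M : Matrix n n R) : M.charpoly.coeff i =
      MvPolynomial.eval (fun ij : n × n => M ij.1 ij.2) ((Matrix.charpoly.univ R n).coeff i) := by
    rw [MvPolynomial.eval, Matrix.charpoly.univ_coeff_eval₂Hom]
    rfl
  simp_rw [h]
  exact MvPolynomial.continuous_eval _ |>.comp (by fun_prop)

section PolynomialFamily

variable {T R : Type*} [TopologicalSpace T] [TopologicalSpace R] {S : Set T} {N : ℕ}

theorem Polynomial.continuousOn_eval_of_natDegree_le [Semiring R] [IsTopologicalSemiring R]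
    {p : T → R[X]} {x : T → R} (hdeg : ∀ t ∈ S, (p t).natDegree ≤ N)
    (hcoeff : ∀ i, ContinuousOn (fun t => (p t).coeff i) S) (hx : ContinuousOn x S) :
    ContinuousOn (fun t => (p t).eval (x t)) S := by
  refine ContinuousOn.congr (f := fun t => ∑ i ∈ Finset.range (N + 1), (p t).coeff i * x t ^ i)
    ?_ fun t ht => eval_eq_sum_range' (Nat.lt_succ_of_le (hdeg t ht)) _
  exact continuousOn_finsetSum _ fun i _ => (hcoeff i).mul (hx.pow i)

theorem Polynomial.continuousOn_coeff_divByMonic_X_sub_C [Ring R] [IsTopologicalRing R]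
    {p : T → R[X]} (hdeg : ∀ t ∈ S, (p t).natDegree ≤ N)
    (hcoeff : ∀ i, ContinuousOn (fun t => (p t).coeff i) S) (a : R) (n : ℕ) :
    ContinuousOn (fun t => (p t /ₘ (X - C a)).coeff n) S := by
  have h (t) (ht : t ∈ S) : (p t /ₘ (X - C a)).coeff n =
      ∑ i ∈ Finset.Icc (n + 1) N, a ^ (i - (n + 1)) * (p t).coeff i := by
    rw [coeff_divByMonic_X_sub_C]
    refine Finset.sum_subset (Finset.Icc_subset_Icc_right (hdeg t ht)) fun i hi hi' => ?_
    rw [coeff_eq_zero_of_natDegree_lt, mul_zero]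
    simp only [Finset.mem_Icc, not_and, not_le] at hi hi'
    exact hi' hi.1
  exact (continuousOn_finsetSum _ fun i _ => continuousOn_const.mul (hcoeff i)).congr h

end PolynomialFamily

theorem ContinuousOn.eval_charpoly_divByMonic_X_sub_C {T n R : Type*} [TopologicalSpace T]
    [Fintype n] [DecidableEq n] [CommRing R] [Nontrivial R] [TopologicalSpace R]
    [IsTopologicalRing R] {A : T → Matrix n n R} {x : T → R} {S : Set T}
    (hA : ContinuousOn A S) (hx : ContinuousOn x S) (a : R) :
    ContinuousOn (fun t => ((A t).charpoly /ₘ (X - C a)).eval (x t)) S := by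
  have hdeg (t : T) : (A t).charpoly.natDegree ≤ Fintype.card n :=
    (Matrix.charpoly_natDegree_eq_dim _).le
  refine continuousOn_eval_of_natDegree_le (N := Fintype.card n) (fun t _ => ?_)
    (fun i => continuousOn_coeff_divByMonic_X_sub_C (fun t _ => hdeg t)
      (fun j => (Matrix.continuous_charpoly_coeff j).comp_continuousOn hA) a i) hx
  rw [natDegree_divByMonic _ (monic_X_sub_C a)]
  exact (Nat.sub_le _ _).trans (hdeg t)

theorem Polynomial.eval_divByMonic_X_sub_C_eq_zero {R : Type*} [CommRing R] [NoZeroDivisors R]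
    {p : R[X]} {a x : R} (ha : p.IsRoot a) (hx : p.IsRoot x) (hxa : x ≠ a) :
    (p /ₘ (X - C a)).eval x = 0 := by
  have h := congrArg (eval x) (mul_divByMonic_eq_iff_isRoot.mpr ha)
  rw [eval_mul, eval_sub, eval_X, eval_C, hx.eq_zero] at h
  exact (mul_eq_zero.mp h).resolve_left (sub_ne_zero.mpr hxa)

theorem Polynomial.eval_divByMonic_X_sub_C_ne_zero {R : Type*} [CommRing R] {p : R[X]} {a : R}
    (hp : p ≠ 0) (h : rootMultiplicity a p = 1) : (p /ₘ (X - C a)).eval a ≠ 0 := by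
  simpa [h] using eval_divByMonic_pow_rootMultiplicity_ne_zero a hp

theorem IsPreconnected.eq_of_eq_iff_ne_zero {X Y Z : Type*} [TopologicalSpace X]
    [TopologicalSpace Y] [T1Space Y] [TopologicalSpace Z] [T1Space Z] [Zero Z] {S : Set X}
    (hS : IsPreconnected S) {f : X → Y} {g : X → Z} {c : Y} (hf : ContinuousOn f S)
    (hg : ContinuousOn g S) (hfg : ∀ x ∈ S, f x = c ↔ g x ≠ 0) {x₀ : X} (hx₀ : x₀ ∈ S)
    (h₀ : f x₀ = c) : ∀ x ∈ S, f x = c := by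
  have := isPreconnected_iff_preconnectedSpace.mp hS
  have hclopen : IsClopen {x : S | f x = c} := by
    refine ⟨isClosed_singleton.preimage hf.domRestrict, ?_⟩
    have h : {x : S | f x = c} = {x : S | g x = 0}ᶜ := Set.ext fun x => hfg x x.2
    exact h ▸ (isClosed_singleton.preimage hg.domRestrict).isOpen_compl
  have h := hclopen.eq_univ ⟨⟨x₀, hx₀⟩, h₀⟩
  exact fun x hx => (Set.ext_iff.mp h ⟨x, hx⟩).mpr trivial

theorem stmt16_general {k : ℕ} (A : ℝ → Matrix (Fin k) (Fin k) ℝ) (Λ : ℝ → ℝ)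
    (hAcont : ContinuousOn A (Set.Icc 0 1))
    (heig1 : ∀ α ∈ Set.Icc (0:ℝ) 1, (A α).charpoly.IsRoot 1)
    (hΛcont : ContinuousOn Λ (Set.Icc 0 1))
    (hΛroot : ∀ α ∈ Set.Icc (0:ℝ) 1, (A α).charpoly.IsRoot (Λ α))
    (hΛ0 : Λ 0 = 1)
    (hsimple : ∀ γ ∈ Set.Icc (0:ℝ) 1, Λ γ = 1 →
      Polynomial.rootMultiplicity (Λ γ) (A γ).charpoly = 1) :
    ∀ α ∈ Set.Icc (0:ℝ) 1, Λ α = 1 := by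
  refine isPreconnected_Icc.eq_of_eq_iff_ne_zero hΛcont
    (hAcont.eval_charpoly_divByMonic_X_sub_C hΛcont 1)
    (fun α hα => ⟨fun h => ?_, fun h => ?_⟩) (Set.left_mem_Icc.mpr zero_le_one) hΛ0
  · rw [h]
    exact eval_divByMonic_X_sub_C_ne_zero (A α).charpoly_monic.ne_zero (h ▸ hsimple α hα h)
  · by_contra hne
    exact h (eval_divByMonic_X_sub_C_eq_zero (heig1 α hα) (hΛroot α hα) hne)

theorem stmt16 {k : ℕ} (A : ℝ → Matrix (Fin k) (Fin k) ℝ) (Λ : ℝ → ℝ)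
    (hAcont : ContinuousOn A (Set.Icc 0 1))
    (hAnn : ∀ α ∈ Set.Icc (0:ℝ) 1, ∀ i j, 0 ≤ A α i j)
    (heig1 : ∀ α ∈ Set.Icc (0:ℝ) 1, (A α).charpoly.IsRoot 1)
    (hΛcont : ContinuousOn Λ (Set.Icc 0 1))
    (hΛroot : ∀ α ∈ Set.Icc (0:ℝ) 1, (A α).charpoly.IsRoot (Λ α))
    (hΛmax : ∀ α ∈ Set.Icc (0:ℝ) 1, ∀ μ : ℝ, (A α).charpoly.IsRoot μ → μ ≤ Λ α)
    (hΛge : ∀ α ∈ Set.Icc (0:ℝ) 1, 1 ≤ Λ α)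
    (hΛ0 : Λ 0 = 1)
    (hsimple : ∀ γ ∈ Set.Icc (0:ℝ) 1, Λ γ = 1 →
      Polynomial.rootMultiplicity (Λ γ) (A γ).charpoly = 1) :
    ∀ α ∈ Set.Icc (0:ℝ) 1, Λ α = 1 :=
  stmt16_general A Λ hAcont heig1 hΛcont hΛroot hΛ0 hsimple
end
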